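/- arXiv:0809.0638 — 2 statements merged into one kernel-verified Lean document; each statement's English description precedes it below -/
import Mathlib

section
/- In the field Frac k[t_m : m ∈ ℤ], the family (y_m)_{m ∈ ℤ, m ≠ 1} with y_m = t_m/t_1^m is algebraically independent over k. -/
variable (k : Type*) [Field k]

/-- The image of the indeterminate `t_m` in `Frac k[t_m : m ∈ ℤ]`. -/
noncomputable def t (m : ℤ) : FractionRing (MvPolynomial ℤ k) :=
  algebraMap (MvPolynomial ℤ k) (FractionRing (MvPolynomial ℤ k)) (MvPolynomial.X m)

/-- The element `y_m = t_m / t_1^m`. -/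
noncomputable def y (m : ℤ) : FractionRing (MvPolynomial ℤ k) :=
  t k m / t k 1 ^ m

/-! Over the field `K = k(t_1)` the variables `t_m`, `m ≠ 1`, stay algebraically independent, and
`y_m` is `t_m` rescaled by the unit `t_1^{-m}` of `K`; rescaling variables by units is an
automorphism of the polynomial ring, so the `y_m` are independent over `K`, hence over `k`. -/

open MvPolynomial

theorem AlgebraicIndependent.units_smul {ι R A : Type*} [CommRing R] [CommRing A] [Algebra R A]
    {x : ι → A} (hx : AlgebraicIndependent R x) (w : ι → Rˣ) :
    AlgebraicIndependent R (w • x) := by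
  let scale (v : ι → Rˣ) : MvPolynomial ι R →ₐ[R] MvPolynomial ι R :=
    aeval fun i => (v i : R) • X i
  have h_inv : (scale w⁻¹).comp (scale w) = AlgHom.id R _ := by
    ext i
    simp [scale, smul_smul]
  have h_comp : aeval (w • x) = (aeval x).comp (scale w) := by
    ext i
    simp [scale, Units.smul_def]
  rw [AlgebraicIndependent, h_comp, AlgHom.coe_comp]
  have h_inj : Function.Injective (scale w) :=
    Function.LeftInverse.injective (g := scale w⁻¹) (AlgHom.congr_fun h_inv)
  exact Function.Injective.comp hx h_inj

theorem t_algebraicIndependent : AlgebraicIndependent k (t k) :=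
  (algebraicIndependent_X ℤ k).map' (f := IsScalarTower.toAlgHom k _ _)
    (IsFractionRing.injective (MvPolynomial ℤ k) (FractionRing (MvPolynomial ℤ k)))

open IntermediateField in
theorem t_algebraicIndependent_adjoin_t_one :
    AlgebraicIndependent (adjoin k {t k 1}) (fun m : {m : ℤ // m ≠ 1} => t k m) := by
  have h := (t_algebraicIndependent k).adjoin_of_disjoint
    (s := {1}) (t := {1}ᶜ) disjoint_compl_right
  rw [Set.image_singleton] at h
  exact algebraicIndependent_adjoin_iff.mpr h

/-- In `Frac k[t_m : m ∈ ℤ]`, the family `(y_m)_{m ≠ 1}`, `y_m = t_m / t_1^m`,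
is algebraically independent over `k`. -/
theorem y_algebraicIndependent :
    AlgebraicIndependent k (fun m : {m : ℤ // m ≠ 1} => y k m.1) := by
  have ht₁ : (⟨t k 1, IntermediateField.subset_adjoin k _ rfl⟩ :
      IntermediateField.adjoin k {t k 1}) ≠ 0 :=
    fun h => (t_algebraicIndependent k).ne_zero 1 (congrArg Subtype.val h)
  let u := Units.mk0 _ ht₁
  convert ((t_algebraicIndependent_adjoin_t_one k).units_smul fun m => u ^ (-m.1)).restrictScalars
    (algebraMap k _).injective using 1
  ext m
  simp [y, div_eq_mul_inv, Units.smul_def, Algebra.smul_def, u, mul_comm]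
end

section
/- Let a, b, c ∈ k with a ≠ 0 and char k ≠ 2, and A_{a,b,c} = k⟨u,v⟩/(u² − a, uv + vu − b, v² − c). Then A_{a,b,c} is a simple algebra if and only if b² − 4ac ≠ 0. -/
variable (k : Type*) [Field k]

/-- The defining relations of `A_{a,b,c}`: `u² = a`, `uv + vu = b`, `v² = c`. -/
inductive ABCRel (a b c : k) : FreeAlgebra k (Fin 2) → FreeAlgebra k (Fin 2) → Prop
  | uu : ABCRel a b c (FreeAlgebra.ι k 0 * FreeAlgebra.ι k 0) (algebraMap k _ a)
  | anti : ABCRel a b c (FreeAlgebra.ι k 0 * FreeAlgebra.ι k 1 +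
      FreeAlgebra.ι k 1 * FreeAlgebra.ι k 0) (algebraMap k _ b)
  | vv : ABCRel a b c (FreeAlgebra.ι k 1 * FreeAlgebra.ι k 1) (algebraMap k _ c)

/-- The algebra `A_{a,b,c} = k⟨u,v⟩/(u² − a, uv + vu − b, v² − c)`. -/
def ABC (a b c : k) := RingQuot (ABCRel k a b c)

noncomputable instance (a b c : k) : Ring (ABC k a b c) := by unfold ABC; infer_instance
noncomputable instance (a b c : k) : Algebra k (ABC k a b c) := by unfold ABC; infer_instance

/-!
Completing the square, `v' = v - (b / 2a) u` anticommutes with `u` and squares to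
`d = c - b² / 4a`, so `A_{a,b,c}` is the quaternion algebra `(a, d)`, and `b² - 4ac = -4ad`.
If `d = 0`, killing `j` is a non-injective algebra map of the quaternion algebra to itself.
If `d ≠ 0`, then `4ad · re x` is a combination of `x`, `i x i`, `j x j` and `k x k`, and a
nonzero `x` has one of `x`, `i x`, `j x`, `k x` with nonzero real part, so every nonzero
two-sided ideal contains a nonzero scalar.
-/

open scoped Quaternion

theorem RingEquiv.isSimpleRing_iff {R S : Type*} [Ring R] [Ring S] (e : R ≃+* S) :
    IsSimpleRing R ↔ IsSimpleRing S :=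
  ⟨fun h => h.of_ringEquiv e, fun h => h.of_ringEquiv e.symm⟩

namespace QuaternionAlgebra

section CommRing

variable {R : Type*} [CommRing R]

def Basis.ofAnticommutator {A : Type*} [Ring A] [Algebra R A] {a t d : R} {u v : A}
    (huu : u * u = algebraMap R A a) (huv : u * v + v * u = algebraMap R A (2 * t * a))
    (hvv : v * v = algebraMap R A (d + t ^ 2 * a)) : Basis A a 0 d where
  i := u
  j := v - t • u
  k := u * (v - t • u)
  i_mul_i := by rw [huu, Algebra.algebraMap_eq_smul_one, zero_smul, add_zero]
  j_mul_j := by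
    simp only [Algebra.algebraMap_eq_smul_one] at huu huv hvv
    simp only [sub_mul, mul_sub, smul_mul_assoc, mul_smul_comm]
    linear_combination (norm := module) hvv - t • huv + t ^ 2 • huu
  i_mul_j := rfl
  j_mul_i := by
    simp only [Algebra.algebraMap_eq_smul_one] at huu huv
    simp only [sub_mul, mul_sub, smul_mul_assoc, mul_smul_comm]
    linear_combination (norm := module) huv - (2 * t) • huu

theorem not_isSimpleRing_of_eq_zero [Nontrivial R] (c₁ c₂ : R) :
    ¬ IsSimpleRing ℍ[R, c₁, c₂, 0] := by
  intro _
  let killJ : Basis ℍ[R, c₁, c₂, 0] c₁ c₂ 0 :=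
    { i := (Basis.self R).i, j := 0, k := 0
      i_mul_i := (Basis.self R).i_mul_i
      j_mul_j := by simp
      i_mul_j := by simp
      j_mul_i := by simp }
  have hj : killJ.liftHom (Basis.self R).j = killJ.liftHom 0 := by simp [killJ, Basis.lift]
  simpa using congrArg imJ (killJ.liftHom.toRingHom.injective hj)

variable {c₁ c₃ : R}

theorem algebraMap_four_mul_re (x : ℍ[R, c₁, c₃]) :
    algebraMap R _ (4 * c₁ * c₃ * x.re) =
      (c₁ * c₃) • x + c₃ • ((Basis.self R).i * x * (Basis.self R).i) +
        c₁ • ((Basis.self R).j * x * (Basis.self R).j) -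
          (Basis.self R).k * x * (Basis.self R).k := by
  ext <;> simp [coe_algebraMap] <;> ring

theorem exists_re_mul_ne_zero [IsDomain R] (h₁ : c₁ ≠ 0) (h₃ : c₃ ≠ 0) {x : ℍ[R, c₁, c₃]}
    (hx : x ≠ 0) : ∃ y : ℍ[R, c₁, c₃], (y * x).re ≠ 0 := by
  by_contra! h
  have hi := h (Basis.self R).i
  have hj := h (Basis.self R).j
  have hk := h (Basis.self R).k
  simp only [Basis.i_self, Basis.j_self, Basis.k_self, re_mul] at hi hj hk
  exact hx <| QuaternionAlgebra.ext (by simpa using h 1) (by simp_all) (by simp_all) (by simp_all)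

end CommRing

variable {K : Type*} [Field K] {c₁ c₃ : K}

theorem isSimpleRing_of_ne_zero (h2 : (2 : K) ≠ 0) (h₁ : c₁ ≠ 0) (h₃ : c₃ ≠ 0) :
    IsSimpleRing ℍ[K, c₁, c₃] := by
  refine .of_eq_bot_or_eq_top fun I => or_iff_not_imp_left.mpr fun hI => ?_
  have smul_mem (r : K) {z} (hz : z ∈ I) : r • z ∈ I :=
    Algebra.smul_def r z ▸ I.mul_mem_left _ _ hz
  have conj_mem (e : ℍ[K, c₁, c₃]) {z} (hz : z ∈ I) : e * z * e ∈ I :=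
    I.mul_mem_right _ _ (I.mul_mem_left _ _ hz)
  obtain ⟨x, hxI, hx⟩ := SetLike.exists_of_lt (bot_lt_iff_ne_bot.mpr hI)
  obtain ⟨y, hy⟩ := exists_re_mul_ne_zero h₁ h₃ hx
  have hyx : y * x ∈ I := I.mul_mem_left _ _ hxI
  have hscalar : algebraMap K _ (4 * c₁ * c₃ * (y * x).re) ∈ I := by
    rw [algebraMap_four_mul_re]
    exact I.sub_mem (I.add_mem (I.add_mem (smul_mem _ hyx) (smul_mem _ (conj_mem _ hyx)))
      (smul_mem _ (conj_mem _ hyx))) (conj_mem _ hyx)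
  have hα : 4 * c₁ * c₃ * (y * x).re ≠ 0 := by
    have h4 : (4 : K) ≠ 0 := by simpa [← two_add_two_eq_four, ← two_mul] using mul_ne_zero h2 h2
    exact mul_ne_zero (mul_ne_zero (mul_ne_zero h4 h₁) h₃) hy
  rw [← TwoSidedIdeal.one_mem_iff]
  have := smul_mem (4 * c₁ * c₃ * (y * x).re)⁻¹ hscalar
  rwa [Algebra.smul_def, ← map_mul, inv_mul_cancel₀ hα, map_one] at this

theorem isSimpleRing_iff (h2 : (2 : K) ≠ 0) (h₁ : c₁ ≠ 0) :
    IsSimpleRing ℍ[K, c₁, c₃] ↔ c₃ ≠ 0 := by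
  refine ⟨?_, isSimpleRing_of_ne_zero h2 h₁⟩
  rintro h rfl
  exact not_isSimpleRing_of_eq_zero c₁ 0 h

end QuaternionAlgebra

namespace ABC

variable {k} {a b c : k}

noncomputable def mk : FreeAlgebra k (Fin 2) →ₐ[k] ABC k a b c := RingQuot.mkAlgHom k _

theorem mk_eq_mk {x y : FreeAlgebra k (Fin 2)} (h : ABCRel k a b c x y) :
    (mk x : ABC k a b c) = mk y :=
  RingQuot.mkAlgHom_rel k h

noncomputable def u : ABC k a b c := mk (FreeAlgebra.ι k 0)

noncomputable def v : ABC k a b c := mk (FreeAlgebra.ι k 1)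

theorem u_mul_u : (u : ABC k a b c) * u = algebraMap k _ a := by
  rw [u, ← map_mul, mk_eq_mk .uu, AlgHom.commutes]

theorem u_mul_v_add_v_mul_u : (u : ABC k a b c) * v + v * u = algebraMap k _ b := by
  rw [u, v, ← map_mul, ← map_mul, ← map_add, mk_eq_mk .anti, AlgHom.commutes]

theorem v_mul_v : (v : ABC k a b c) * v = algebraMap k _ c := by
  rw [v, ← map_mul, mk_eq_mk .vv, AlgHom.commutes]

section Lift

variable {B : Type*} [Ring B] [Algebra k B] (x y : B) (hx : x * x = algebraMap k B a)
  (hxy : x * y + y * x = algebraMap k B b) (hy : y * y = algebraMap k B c)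

noncomputable def lift : ABC k a b c →ₐ[k] B :=
  RingQuot.liftAlgHom k ⟨FreeAlgebra.lift k ![x, y], by rintro _ _ (_ | _ | _) <;> simp [*]⟩

@[simp]
theorem lift_u : lift x y hx hxy hy u = x :=
  (RingQuot.liftAlgHom_mkAlgHom_apply k _ _ _).trans (by simp)

@[simp]
theorem lift_v : lift x y hx hxy hy v = y :=
  (RingQuot.liftAlgHom_mkAlgHom_apply k _ _ _).trans (by simp)

@[ext]
theorem hom_ext {f g : ABC k a b c →ₐ[k] B} (hu : f u = g u) (hv : f v = g v) : f = g :=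
  RingQuot.ringQuot_ext' k f g (s := ABCRel k a b c) <| FreeAlgebra.hom_ext <| funext fun i => by
    fin_cases i; exacts [hu, hv]

end Lift

open QuaternionAlgebra

variable (a) (t d : k)

noncomputable def equivQuaternion : ABC k a (2 * t * a) (d + t ^ 2 * a) ≃ₐ[k] ℍ[k, a, d] :=
  AlgEquiv.ofAlgHom
    (lift (Basis.self k).i ((Basis.self k).j + t • (Basis.self k).i)
      (by ext <;> simp) (by ext <;> simp; ring) (by ext <;> simp [sq]; ring))
    (Basis.ofAnticommutator u_mul_u u_mul_v_add_v_mul_u v_mul_v).liftHom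
    (by ext <;> simp [Basis.ofAnticommutator, Basis.lift])
    (by ext <;> simp [Basis.ofAnticommutator, Basis.lift])

end ABC

/-- If `char k ≠ 2` and `a ≠ 0`, the algebra `A_{a,b,c}` is simple if and only if
`b² − 4ac ≠ 0`. -/
theorem ABC_simple_iff (h2 : (2 : k) ≠ 0) (a b c : k) (ha : a ≠ 0) :
    IsSimpleRing (ABC k a b c) ↔ b ^ 2 - 4 * a * c ≠ 0 := by
  have h4 : (4 : k) ≠ 0 := by simpa [← two_add_two_eq_four, ← two_mul] using mul_ne_zero h2 h2
  obtain ⟨t, d, rfl, rfl⟩ : ∃ t d : k, b = 2 * t * a ∧ c = d + t ^ 2 * a :=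
    ⟨b / (2 * a), c - b ^ 2 / (4 * a), by field_simp, by field_simp; ring⟩
  have hdisc : (2 * t * a) ^ 2 - 4 * a * (d + t ^ 2 * a) = -(4 * a * d) := by ring
  rw [(ABC.equivQuaternion a t d).toRingEquiv.isSimpleRing_iff,
    QuaternionAlgebra.isSimpleRing_iff h2 ha, hdisc, neg_ne_zero]
  simp [h4, ha]
end
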